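/- Let n₁, n₂ be positive integers, Q_α = 2 n_α + 2, c_α = n_α!/(4(π/2)^{n_α+1}), and for t > 0 and g = (s,z) ∈ ℋ_{n_α} set S_α(t,g) = c_α/(|z|² + t − i s)^{n_α+1}. There is a constant C > 0 depending only on n₁, n₂ such that for all t₁, t₂ > 0, τ₁, τ₂ > 0 and γ₁, γ₂ > 0, ∫_{{(g₁,g₂) : ‖g₁‖₁ > γ₁τ₁ and ‖g₂‖₂ > γ₂τ₂}} |S₁(t₁,g₁) − S₁(t₁+τ₁², g₁)| · |S₂(t₂,g₂) − S₂(t₂+τ₂², g₂)| dg₁ dg₂ ≤ C γ₁^{−2} γ₂^{−2}. -/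

import Mathlib

open MeasureTheory
open scoped ENNReal

noncomputable section

/-- A point of the Heisenberg group ℋ_n : `(s, z) ∈ ℝ × ℂⁿ`. -/
abbrev Heis (n : ℕ) := ℝ × (Fin n → ℂ)

/-- `|z|² = ∑ⱼ |zⱼ|²`. -/
def znormSq {n : ℕ} (z : Fin n → ℂ) : ℝ := ∑ j, Complex.normSq (z j)

/-- The homogeneous norm `‖(s,z)‖ = (|z|⁴ + s²)^{1/4}`. -/
def hnorm {n : ℕ} (g : Heis n) : ℝ := ((znormSq g.2) ^ 2 + g.1 ^ 2) ^ (1/4 : ℝ)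

/-- The constant `c = n! / (4 (π/2)^{n+1})`. -/
def szegoConst (n : ℕ) : ℝ := (Nat.factorial n : ℝ) / (4 * (Real.pi / 2) ^ (n + 1))

/-- The Cauchy–Szegő kernel `S(t,g) = c/(|z|² + t − i s)^{n+1}`. -/
def Szego (n : ℕ) (t : ℝ) (g : Heis n) : ℂ :=
  (szegoConst n : ℂ) / (((znormSq g.2 : ℝ) : ℂ) + (t : ℂ) - Complex.I * (g.1 : ℂ)) ^ (n + 1)

/-!
Since the integrand and the region factor, Tonelli reduces the estimate to the one-parameter bound
`∫_{‖g‖ > γτ} |S(t,g) − S(t+τ²,g)| dg ≤ C γ⁻²`. The denominator `w(t) = |z|² + t − is` satisfies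
`|w(t)| ≥ ‖g‖²` and `w(t + τ²) − w(t) = τ²`, so `|S(t,g) − S(t+τ²,g)| ≲ τ² ‖g‖^{-(Q+2)}`.
The homogeneous ball `{‖g‖ < r}` lies in the box `[-r², r²] × B(0,r)` of volume `≲ r^Q`, so summing
over the dyadic shells `2ᵏR ≤ ‖g‖ < 2ᵏ⁺¹R` gives `∫_{‖g‖ > R} ‖g‖^{-(Q+2)} ≲ R⁻²`; with
`R = γτ` the factor `τ²` cancels.
-/

open scoped ENNReal

lemma norm_inv_pow_sub_inv_pow_le {𝕜 : Type*} [NormedField 𝕜] (m : ℕ) {a b : 𝕜} {h : ℝ}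
    (hh : 0 < h) (hb : h ≤ ‖b‖) (hba : ‖b‖ ≤ ‖a‖) :
    ‖(b ^ m)⁻¹ - (a ^ m)⁻¹‖ ≤ m * ‖a - b‖ / h ^ (m + 1) := by
  have hb0 : b ≠ 0 := norm_pos_iff.1 (hh.trans_le hb)
  have ha0 : a ≠ 0 := norm_pos_iff.1 (hh.trans_le (hb.trans hba))
  have hinv : ∀ c : 𝕜, h ≤ ‖c‖ → ‖c⁻¹‖ ≤ h⁻¹ := fun c hc => by
    rw [norm_inv]; exact inv_anti₀ hh hc
  have geom : ‖∑ i ∈ Finset.range m, b⁻¹ ^ i * a⁻¹ ^ (m - 1 - i)‖ ≤ m * h⁻¹ ^ (m - 1) := by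
    refine (norm_sum_le _ _).trans ?_
    refine (Finset.sum_le_sum (g := fun _ => h⁻¹ ^ (m - 1)) fun i hi => ?_).trans_eq (by simp)
    have hi : i + (m - 1 - i) = m - 1 := by have := Finset.mem_range.1 hi; omega
    rw [norm_mul, norm_pow, norm_pow, ← hi, pow_add, Nat.add_sub_cancel_left]
    gcongr
    exacts [hinv b hb, hinv a (hb.trans hba)]
  have diff : ‖b⁻¹ - a⁻¹‖ ≤ ‖a - b‖ / (h * h) := by
    rw [inv_sub_inv hb0 ha0, norm_div, norm_mul]
    gcongr
    exact hb.trans hba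
  calc ‖(b ^ m)⁻¹ - (a ^ m)⁻¹‖
      = ‖∑ i ∈ Finset.range m, b⁻¹ ^ i * a⁻¹ ^ (m - 1 - i)‖ * ‖b⁻¹ - a⁻¹‖ := by
        rw [← norm_mul, geom_sum₂_mul, inv_pow, inv_pow]
    _ ≤ m * h⁻¹ ^ (m - 1) * (‖a - b‖ / (h * h)) := by gcongr
    _ = m * ‖a - b‖ / h ^ (m + 1) := by
        rcases m with _ | m
        · simp
        · rw [Nat.add_sub_cancel, inv_pow]
          field_simp
          ring

section DyadicTail

variable {X : Type*} [MeasurableSpace X] {μ : Measure X} {ρ : X → ℝ}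

lemma exists_dyadic_shell {R r : ℝ} (hR : 0 < R) (hr : R < r) :
    ∃ k : ℕ, 2 ^ k * R ≤ r ∧ r < 2 ^ (k + 1) * R := by
  obtain ⟨k, hk⟩ := exists_nat_pow_near ((one_le_div hR).2 hr.le) one_lt_two
  exact ⟨k, (le_div_iff₀ hR).1 hk.1, (div_lt_iff₀ hR).1 hk.2⟩

lemma dyadic_shell_weight_le {Q p : ℕ} (hp : 0 < p) {R : ℝ} (hR : 0 < R) (k : ℕ) :
    ((2 ^ k * R) ^ (Q + p))⁻¹ * (2 ^ (k + 1) * R) ^ Q ≤ 2 ^ Q / R ^ p * (1 / 2) ^ k := by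
  have h2k : (2 : ℝ) ^ k ≤ (2 ^ k) ^ p := le_self_pow₀ (one_le_pow₀ one_le_two) hp.ne'
  calc ((2 ^ k * R) ^ (Q + p))⁻¹ * (2 ^ (k + 1) * R) ^ Q
      = 2 ^ Q / R ^ p / (2 ^ k) ^ p := by field_simp; ring
    _ ≤ 2 ^ Q / R ^ p / 2 ^ k := by gcongr
    _ = 2 ^ Q / R ^ p * (1 / 2) ^ k := by rw [one_div_pow, mul_one_div]

theorem lintegral_inv_pow_tail_le {Q p : ℕ} (hp : 0 < p) {A : ℝ≥0∞}
    (hA : ∀ r, 0 < r → μ {x | ρ x < r} ≤ A * ENNReal.ofReal (r ^ Q)) {R : ℝ} (hR : 0 < R) :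
    ∫⁻ x in {x | R < ρ x}, ENNReal.ofReal (ρ x ^ (Q + p))⁻¹ ∂μ
      ≤ 2 * A * ENNReal.ofReal (2 ^ Q / R ^ p) := by
  set shell : ℕ → Set X := fun k => {x | 2 ^ k * R ≤ ρ x ∧ ρ x < 2 ^ (k + 1) * R}
  have cover : {x | R < ρ x} ⊆ ⋃ k, shell k := fun x hx =>
    Set.mem_iUnion.2 (exists_dyadic_shell hR hx)
  have on_shell : ∀ k, ∫⁻ x in shell k, ENNReal.ofReal (ρ x ^ (Q + p))⁻¹ ∂μ
      ≤ A * ENNReal.ofReal (2 ^ Q / R ^ p) * 2⁻¹ ^ k := by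
    intro k
    calc ∫⁻ x in shell k, ENNReal.ofReal (ρ x ^ (Q + p))⁻¹ ∂μ
        ≤ ∫⁻ x in shell k, ENNReal.ofReal ((2 ^ k * R) ^ (Q + p))⁻¹ ∂μ :=
          setLIntegral_mono measurable_const fun x hx => ENNReal.ofReal_le_ofReal <|
            inv_anti₀ (by positivity) (pow_le_pow_left₀ (by positivity) hx.1 _)
      _ = ENNReal.ofReal ((2 ^ k * R) ^ (Q + p))⁻¹ * μ (shell k) := setLIntegral_const _ _
      _ ≤ ENNReal.ofReal ((2 ^ k * R) ^ (Q + p))⁻¹ *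
            (A * ENNReal.ofReal ((2 ^ (k + 1) * R) ^ Q)) := by
          gcongr
          exact (measure_mono fun x hx => hx.2).trans (hA _ (by positivity))
      _ ≤ A * ENNReal.ofReal (2 ^ Q / R ^ p * (1 / 2) ^ k) := by
          rw [mul_left_comm, ← ENNReal.ofReal_mul (by positivity)]
          exact mul_le_mul_right (ENNReal.ofReal_le_ofReal (dyadic_shell_weight_le hp hR k)) A
      _ = A * ENNReal.ofReal (2 ^ Q / R ^ p) * 2⁻¹ ^ k := by
          rw [ENNReal.ofReal_mul (by positivity), ENNReal.ofReal_pow (by norm_num), one_div,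
            ENNReal.ofReal_inv_of_pos two_pos, ENNReal.ofReal_ofNat, mul_assoc]
  calc ∫⁻ x in {x | R < ρ x}, ENNReal.ofReal (ρ x ^ (Q + p))⁻¹ ∂μ
      ≤ ∫⁻ x in ⋃ k, shell k, ENNReal.ofReal (ρ x ^ (Q + p))⁻¹ ∂μ := lintegral_mono_set cover
    _ ≤ ∑' k, ∫⁻ x in shell k, ENNReal.ofReal (ρ x ^ (Q + p))⁻¹ ∂μ := lintegral_iUnion_le _ _
    _ ≤ ∑' k, A * ENNReal.ofReal (2 ^ Q / R ^ p) * 2⁻¹ ^ k := ENNReal.tsum_le_tsum on_shell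
    _ = 2 * A * ENNReal.ofReal (2 ^ Q / R ^ p) := by
      rw [ENNReal.tsum_mul_left, ENNReal.tsum_geometric_two, mul_comm, mul_assoc]

end DyadicTail

section Heisenberg

variable {n : ℕ}

lemma znormSq_nonneg (z : Fin n → ℂ) : 0 ≤ znormSq z :=
  Finset.sum_nonneg fun _ _ => Complex.normSq_nonneg _

lemma normSq_le_znormSq (z : Fin n → ℂ) (j : Fin n) : Complex.normSq (z j) ≤ znormSq z :=
  Finset.single_le_sum (f := fun j => Complex.normSq (z j))
    (fun _ _ => Complex.normSq_nonneg _) (Finset.mem_univ j)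

lemma hnorm_nonneg (g : Heis n) : 0 ≤ hnorm g :=
  Real.rpow_nonneg (by positivity) _

lemma hnorm_pow_four (g : Heis n) : hnorm g ^ 4 = znormSq g.2 ^ 2 + g.1 ^ 2 := by
  rw [hnorm, ← Real.rpow_natCast, ← Real.rpow_mul (by positivity)]
  norm_num

lemma hnorm_sq (g : Heis n) : hnorm g ^ 2 = √(znormSq g.2 ^ 2 + g.1 ^ 2) := by
  rw [← hnorm_pow_four, show 4 = 2 * 2 from rfl, pow_mul, Real.sqrt_sq (by positivity)]

@[fun_prop]
lemma measurable_hnorm : Measurable (hnorm (n := n)) := by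
  unfold hnorm znormSq
  fun_prop

@[fun_prop]
lemma measurable_szego (t : ℝ) : Measurable (Szego n t) := by
  unfold Szego znormSq
  fun_prop

lemma volume_hnorm_lt_le (r : ℝ) (hr : 0 < r) :
    volume {g : Heis n | hnorm g < r}
      ≤ 2 * volume (Metric.closedBall (0 : Fin n → ℂ) 1) * ENNReal.ofReal (r ^ (2 * n + 2)) := by
  have box : {g : Heis n | hnorm g < r} ⊆ Set.Icc (-r ^ 2) (r ^ 2) ×ˢ Metric.closedBall 0 r := by
    rintro ⟨s, z⟩ hg
    have h4 : znormSq z ^ 2 + s ^ 2 < r ^ 4 := by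
      rw [← hnorm_pow_four (s, z)]
      exact pow_lt_pow_left₀ hg (hnorm_nonneg _) (by norm_num)
    have hz := znormSq_nonneg z
    refine ⟨⟨by nlinarith, by nlinarith⟩, ?_⟩
    rw [mem_closedBall_zero_iff, pi_norm_le_iff_of_nonneg hr.le]
    intro j
    have hj : ‖z j‖ ^ 2 ≤ r ^ 2 := by
      rw [Complex.sq_norm]
      nlinarith [normSq_le_znormSq z j]
    exact le_of_pow_le_pow_left₀ two_ne_zero hr.le hj
  have finrank_eq : Module.finrank ℝ (Fin n → ℂ) = 2 * n := by
    simp [Module.finrank_pi_fintype, Complex.finrank_real_complex, mul_comm]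
  calc volume {g : Heis n | hnorm g < r}
      ≤ volume (Set.Icc (-r ^ 2) (r ^ 2) ×ˢ Metric.closedBall (0 : Fin n → ℂ) r) :=
        measure_mono box
    _ = ENNReal.ofReal (2 * r ^ 2) *
          (ENNReal.ofReal (r ^ (2 * n)) * volume (Metric.closedBall (0 : Fin n → ℂ) 1)) := by
        rw [Measure.volume_eq_prod, Measure.prod_prod, Real.volume_Icc,
          Measure.addHaar_closedBall' _ _ hr.le, finrank_eq, sub_neg_eq_add, ← two_mul]
    _ = 2 * volume (Metric.closedBall (0 : Fin n → ℂ) 1) * ENNReal.ofReal (r ^ (2 * n + 2)) := by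
        rw [ENNReal.ofReal_mul zero_le_two, ENNReal.ofReal_ofNat, pow_add, mul_comm (r ^ _),
          ENNReal.ofReal_mul (by positivity)]
        ring

end Heisenberg

section SzegoKernel

variable {n : ℕ}

def szegoDenom (n : ℕ) (t : ℝ) (g : Heis n) : ℂ :=
  ((znormSq g.2 : ℝ) : ℂ) + (t : ℂ) - Complex.I * (g.1 : ℂ)

lemma szego_eq_mul_inv (t : ℝ) (g : Heis n) :
    Szego n t g = szegoConst n * (szegoDenom n t g ^ (n + 1))⁻¹ :=
  div_eq_mul_inv _ _

lemma norm_szegoDenom (t : ℝ) (g : Heis n) :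
    ‖szegoDenom n t g‖ = √((znormSq g.2 + t) ^ 2 + g.1 ^ 2) := by
  simp [szegoDenom, Complex.norm_def, Complex.normSq_apply, sq]

lemma hnorm_sq_le_norm_szegoDenom {t : ℝ} (ht : 0 ≤ t) (g : Heis n) :
    hnorm g ^ 2 ≤ ‖szegoDenom n t g‖ := by
  rw [hnorm_sq, norm_szegoDenom]
  gcongr <;> linarith [znormSq_nonneg g.2]

lemma norm_szegoDenom_le_of_le {t t' : ℝ} (ht : 0 ≤ t) (htt' : t ≤ t') (g : Heis n) :
    ‖szegoDenom n t g‖ ≤ ‖szegoDenom n t' g‖ := by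
  rw [norm_szegoDenom, norm_szegoDenom]
  have := znormSq_nonneg g.2
  gcongr

lemma szegoDenom_add_sub (t u : ℝ) (g : Heis n) :
    szegoDenom n (t + u) g - szegoDenom n t g = u := by
  simp only [szegoDenom, Complex.ofReal_add]
  ring

lemma szegoConst_pos (n : ℕ) : 0 < szegoConst n := by
  unfold szegoConst
  have := Real.pi_pos
  positivity

theorem norm_szego_sub_le {t u : ℝ} (ht : 0 ≤ t) (hu : 0 ≤ u) {g : Heis n} (hg : 0 < hnorm g) :
    ‖Szego n t g - Szego n (t + u) g‖
      ≤ szegoConst n * (n + 1) * u * (hnorm g ^ (2 * n + 2 + 2))⁻¹ := by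
  have key := norm_inv_pow_sub_inv_pow_le (n + 1) (by positivity)
    (hnorm_sq_le_norm_szegoDenom ht g) (norm_szegoDenom_le_of_le ht (le_add_of_nonneg_right hu) g)
  rw [szegoDenom_add_sub, Complex.norm_real, Real.norm_of_nonneg hu, ← pow_mul] at key
  rw [szego_eq_mul_inv, szego_eq_mul_inv, ← mul_sub, norm_mul, Complex.norm_real,
    Real.norm_of_nonneg (szegoConst_pos n).le]
  calc szegoConst n * ‖(szegoDenom n t g ^ (n + 1))⁻¹ - (szegoDenom n (t + u) g ^ (n + 1))⁻¹‖
      ≤ szegoConst n * (↑(n + 1) * u / hnorm g ^ (2 * (n + 1 + 1))) := by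
        gcongr
        exact (szegoConst_pos n).le
    _ = szegoConst n * (n + 1) * u * (hnorm g ^ (2 * n + 2 + 2))⁻¹ := by
        push_cast
        ring

theorem lintegral_norm_szego_sub_le (n : ℕ) :
    ∃ C : ℝ, 0 < C ∧ ∀ t τ γ : ℝ, 0 ≤ t → 0 < τ → 0 < γ →
      ∫⁻ g in {g : Heis n | γ * τ < hnorm g}, ENNReal.ofReal ‖Szego n t g - Szego n (t + τ ^ 2) g‖
        ≤ ENNReal.ofReal (C / γ ^ 2) := by
  set A : ℝ≥0∞ := 2 * volume (Metric.closedBall (0 : Fin n → ℂ) 1)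
  have hA : A ≠ ⊤ := ENNReal.mul_ne_top ENNReal.ofNat_ne_top measure_closedBall_lt_top.ne
  have hA_pos : 0 < A.toReal := ENNReal.toReal_pos
    (mul_ne_zero two_ne_zero (Metric.measure_closedBall_pos _ _ one_pos).ne') hA
  set K := szegoConst n * (n + 1)
  have hK : 0 < K := mul_pos (szegoConst_pos n) (by positivity)
  refine ⟨K * (2 * A.toReal * 2 ^ (2 * n + 2)), by positivity, fun t τ γ ht hτ hγ => ?_⟩
  calc ∫⁻ g in {g : Heis n | γ * τ < hnorm g}, ENNReal.ofReal ‖Szego n t g - Szego n (t + τ ^ 2) g‖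
      ≤ ∫⁻ g in {g : Heis n | γ * τ < hnorm g},
          ENNReal.ofReal (K * τ ^ 2) * ENNReal.ofReal (hnorm g ^ (2 * n + 2 + 2))⁻¹ := by
        refine setLIntegral_mono (by fun_prop) fun g hg => ?_
        rw [← ENNReal.ofReal_mul (by positivity)]
        exact ENNReal.ofReal_le_ofReal
          (norm_szego_sub_le ht (sq_nonneg τ) ((by positivity : 0 < γ * τ).trans hg))
    _ = ENNReal.ofReal (K * τ ^ 2) *
          ∫⁻ g in {g : Heis n | γ * τ < hnorm g}, ENNReal.ofReal (hnorm g ^ (2 * n + 2 + 2))⁻¹ :=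
        lintegral_const_mul' _ _ ENNReal.ofReal_ne_top
    _ ≤ ENNReal.ofReal (K * τ ^ 2) * (2 * A * ENNReal.ofReal (2 ^ (2 * n + 2) / (γ * τ) ^ 2)) := by
        gcongr
        exact lintegral_inv_pow_tail_le two_pos volume_hnorm_lt_le (by positivity)
    _ = ENNReal.ofReal (K * (2 * A.toReal * 2 ^ (2 * n + 2)) / γ ^ 2) := by
        have h2A : 2 * A = ENNReal.ofReal (2 * A.toReal) := by
          rw [ENNReal.ofReal_mul zero_le_two, ENNReal.ofReal_toReal hA, ENNReal.ofReal_ofNat]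
        rw [h2A, ← ENNReal.ofReal_mul (by positivity), ← ENNReal.ofReal_mul (by positivity)]
        congr 1
        field_simp

theorem setLIntegral_prod_mul {α β : Type*} [MeasurableSpace α] [MeasurableSpace β]
    {μ : Measure α} {ν : Measure β} [SFinite μ] [SFinite ν] {f : α → ℝ≥0∞} {g : β → ℝ≥0∞}
    {s : Set α} {t : Set β} (hf : AEMeasurable f (μ.restrict s))
    (hg : AEMeasurable g (ν.restrict t)) :
    ∫⁻ z in s ×ˢ t, f z.1 * g z.2 ∂μ.prod ν = (∫⁻ x in s, f x ∂μ) * ∫⁻ y in t, g y ∂ν := by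
  rw [← Measure.prod_restrict]
  exact lintegral_prod_mul hf hg

theorem szego_kernel_difference_biparameter_general (n₁ n₂ : ℕ) :
    ∃ C : ℝ, 0 < C ∧ ∀ t₁ t₂ τ₁ τ₂ γ₁ γ₂ : ℝ,
      0 < t₁ → 0 < t₂ → 0 < τ₁ → 0 < τ₂ → 0 < γ₁ → 0 < γ₂ →
      ∫⁻ g in {g : Heis n₁ × Heis n₂ | γ₁ * τ₁ < hnorm g.1 ∧ γ₂ * τ₂ < hnorm g.2},
          ENNReal.ofReal (‖Szego n₁ t₁ g.1 - Szego n₁ (t₁ + τ₁ ^ 2) g.1‖ *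
            ‖Szego n₂ t₂ g.2 - Szego n₂ (t₂ + τ₂ ^ 2) g.2‖)
        ≤ ENNReal.ofReal (C / (γ₁ ^ 2 * γ₂ ^ 2)) := by
  obtain ⟨C₁, hC₁, h₁⟩ := lintegral_norm_szego_sub_le n₁
  obtain ⟨C₂, hC₂, h₂⟩ := lintegral_norm_szego_sub_le n₂
  refine ⟨C₁ * C₂, by positivity, fun t₁ t₂ τ₁ τ₂ γ₁ γ₂ ht₁ ht₂ hτ₁ hτ₂ hγ₁ hγ₂ => ?_⟩
  calc _ = (∫⁻ g in {g : Heis n₁ | γ₁ * τ₁ < hnorm g},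
              ENNReal.ofReal ‖Szego n₁ t₁ g - Szego n₁ (t₁ + τ₁ ^ 2) g‖) *
            ∫⁻ g in {g : Heis n₂ | γ₂ * τ₂ < hnorm g},
              ENNReal.ofReal ‖Szego n₂ t₂ g - Szego n₂ (t₂ + τ₂ ^ 2) g‖ := by
        simp_rw [ENNReal.ofReal_mul (norm_nonneg _)]
        have hF₁ : Measurable fun g => ENNReal.ofReal ‖Szego n₁ t₁ g - Szego n₁ (t₁ + τ₁ ^ 2) g‖ :=
          by fun_prop
        have hF₂ : Measurable fun g => ENNReal.ofReal ‖Szego n₂ t₂ g - Szego n₂ (t₂ + τ₂ ^ 2) g‖ :=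
          by fun_prop
        rw [Measure.volume_eq_prod]
        exact setLIntegral_prod_mul (s := {g | γ₁ * τ₁ < hnorm g}) (t := {g | γ₂ * τ₂ < hnorm g})
          hF₁.aemeasurable hF₂.aemeasurable
    _ ≤ ENNReal.ofReal (C₁ / γ₁ ^ 2) * ENNReal.ofReal (C₂ / γ₂ ^ 2) :=
        mul_le_mul' (h₁ t₁ τ₁ γ₁ ht₁.le hτ₁ hγ₁) (h₂ t₂ τ₂ γ₂ ht₂.le hτ₂ hγ₂)
    _ = ENNReal.ofReal (C₁ * C₂ / (γ₁ ^ 2 * γ₂ ^ 2)) := by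
        rw [← ENNReal.ofReal_mul (by positivity), div_mul_div_comm]

/-- Bi-parameter integral estimate for the product of Cauchy–Szegő kernel
differences over the bi-parameter exterior region. -/
theorem szego_kernel_difference_biparameter (n₁ n₂ : ℕ) (hn₁ : 0 < n₁) (hn₂ : 0 < n₂) :
    ∃ C : ℝ, 0 < C ∧ ∀ t₁ t₂ τ₁ τ₂ γ₁ γ₂ : ℝ,
      0 < t₁ → 0 < t₂ → 0 < τ₁ → 0 < τ₂ → 0 < γ₁ → 0 < γ₂ →
      ∫⁻ g in {g : Heis n₁ × Heis n₂ | γ₁ * τ₁ < hnorm g.1 ∧ γ₂ * τ₂ < hnorm g.2},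
          ENNReal.ofReal (‖Szego n₁ t₁ g.1 - Szego n₁ (t₁ + τ₁ ^ 2) g.1‖ *
            ‖Szego n₂ t₂ g.2 - Szego n₂ (t₂ + τ₂ ^ 2) g.2‖)
        ≤ ENNReal.ofReal (C / (γ₁ ^ 2 * γ₂ ^ 2)) :=
  szego_kernel_difference_biparameter_general n₁ n₂
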